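/- For every sufficiently large positive integer n, the Cayley graph of Z_n with connection set {±1, ±⌊n^{1/3}⌉, ±⌊n^{2/3}⌉} (where ⌊·⌉ denotes nearest integer) has diameter at most 3·n^{1/3} + 3. -/

import Mathlib

/-!
Write `α = n^(1/3)`, `s = ⌊α⌉`, `t = ⌊α²⌉`. Every residue `m < n` is `m = a t + b s + c` with
`a = m / t`, `b = (m % t) / s`, `c = (m % t) % s`. Once `α ≥ 2`, rounding errors are small
enough that `n ≤ (s + 1) t` and `t ≤ s (s + 2)`, whence `a ≤ s`, `b ≤ s + 1`, `c ≤ s - 1`, so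
every vertex is within `3 s ≤ 3 α + 3/2` steps of any other.
-/

/-- Nearest integer to `n^(1/3)`. -/
noncomputable def nearCube1 (n : ℕ) : ℤ := round ((n : ℝ) ^ ((1 : ℝ) / 3))

/-- Nearest integer to `n^(2/3)`. -/
noncomputable def nearCube2 (n : ℕ) : ℤ := round ((n : ℝ) ^ ((2 : ℝ) / 3))

/-- The Cayley graph `Λ₃(n)` of `ZMod n` with connection set
`{±1, ±⌊n^(1/3)⌉, ±⌊n^(2/3)⌉}`. -/
noncomputable def lam3 (n : ℕ) : SimpleGraph (ZMod n) :=
  SimpleGraph.fromRel (fun x y =>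
    ∃ g : ℤ, (g = 1 ∨ g = nearCube1 n ∨ g = nearCube2 n) ∧ y = x + (g : ZMod n))

namespace SimpleGraph

variable {A : Type*} [AddMonoid A] {G : SimpleGraph A} {g : A}

lemma edist_add_le_one (hg : ∀ x, x ≠ x + g → G.Adj x (x + g)) (x : A) :
    G.edist x (x + g) ≤ 1 :=
  edist_le_one_iff_adj_or_eq.mpr <| (em (x = x + g)).symm.imp (hg x) id

lemma edist_add_nsmul_le (hg : ∀ x, x ≠ x + g → G.Adj x (x + g)) (x : A) (k : ℕ) :
    G.edist x (x + k • g) ≤ k := by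
  induction k with
  | zero => simp
  | succ k ih =>
    calc G.edist x (x + (k + 1) • g)
        ≤ G.edist x (x + k • g) + G.edist (x + k • g) (x + k • g + g) := by
          rw [succ_nsmul, ← add_assoc]; exact G.edist_triangle
      _ ≤ k + 1 := add_le_add ih (edist_add_le_one hg _)
      _ = (k + 1 : ℕ) := by push_cast; rfl

end SimpleGraph

lemma lam3_adj_add {n : ℕ} {g : ℤ} (hg : g = 1 ∨ g = nearCube1 n ∨ g = nearCube2 n)
    (x : ZMod n) (hx : x ≠ x + g) : (lam3 n).Adj x (x + g) :=
  (SimpleGraph.fromRel_adj _ _ _).mpr ⟨hx, Or.inl ⟨g, hg, rfl⟩⟩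

lemma lam3_edist_le (n : ℕ) (x : ZMod n) (a b c : ℕ) :
    (lam3 n).edist x (x + a • (nearCube2 n : ZMod n) + b • (nearCube1 n : ZMod n) + c • 1)
      ≤ a + b + c := by
  have step {g : ℤ} (hg : g = 1 ∨ g = nearCube1 n ∨ g = nearCube2 n) (y : ZMod n) (k : ℕ) :=
    SimpleGraph.edist_add_nsmul_le (lam3_adj_add hg) y k
  set y := x + a • (nearCube2 n : ZMod n)
  set z := y + b • (nearCube1 n : ZMod n)
  calc _ ≤ (lam3 n).edist x y + (lam3 n).edist y z + (lam3 n).edist z (z + c • 1) :=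
        SimpleGraph.edist_triangle.trans (add_le_add_left SimpleGraph.edist_triangle _)
    _ ≤ a + b + c := by
      gcongr
      exacts [step (by tauto) _ _, step (by tauto) _ _, by simpa using step (g := 1) (by tauto) _ _]

lemma div_add_mod_div_add_mod_mod_le {m s t : ℕ} (hm : m < (s + 1) * t)
    (ht : t ≤ s * (s + 2)) : m / t + m % t / s + m % t % s ≤ 3 * s := by
  have ht0 : 0 < t := Nat.pos_of_ne_zero (by rintro rfl; simp at hm)
  have hs0 : 0 < s := Nat.pos_of_ne_zero (by rintro rfl; omega)
  have ha : m / t < s + 1 := Nat.div_lt_of_lt_mul (by rwa [mul_comm])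
  have hb : m % t / s < s + 2 := Nat.div_lt_of_lt_mul ((Nat.mod_lt m ht0).trans_le ht)
  have hc : m % t % s < s := Nat.mod_lt _ hs0
  omega

lemma lam3_diam_le {n s t : ℕ} [NeZero n] (hs : (s : ℤ) = nearCube1 n)
    (ht : (t : ℤ) = nearCube2 n) (hn : n ≤ (s + 1) * t) (hts : t ≤ s * (s + 2)) :
    (lam3 n).diam ≤ 3 * s := by
  suffices h : (lam3 n).ediam ≤ (3 * s : ℕ) from ENat.toNat_le_of_le_natCast h
  refine SimpleGraph.ediam_le_of_edist_le fun u v => ?_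
  set m := (v - u).val
  have hm : (m : ZMod n) = v - u := ZMod.natCast_zmod_val _
  have hdecomp : ((m / t * t + (m % t / s * s + m % t % s) : ℕ) : ZMod n) = m := by
    rw [Nat.div_add_mod', Nat.div_add_mod']
  have hv : v = u + (m / t) • (nearCube2 n : ZMod n) + (m % t / s) • (nearCube1 n : ZMod n)
      + (m % t % s) • 1 := by
    rw [← ht, ← hs]
    push_cast [nsmul_eq_mul] at hdecomp ⊢
    linear_combination -hdecomp - hm
  rw [hv]
  refine (lam3_edist_le n u _ _ _).trans ?_
  exact_mod_cast div_add_mod_div_add_mod_mod_le ((ZMod.val_lt _).trans_le hn) hts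

lemma bounds_of_abs_sub_le_half {α s t : ℝ} (hα : 2 ≤ α) (hs : |s - α| ≤ 1 / 2)
    (ht : |t - α ^ 2| ≤ 1 / 2) : 0 < s ∧ 0 < t ∧ α ^ 3 ≤ (s + 1) * t ∧ t ≤ s * (s + 2) := by
  rw [abs_le] at hs ht
  refine ⟨by linarith, by nlinarith, ?_, by nlinarith⟩
  calc α ^ 3 ≤ (α + 1 / 2) * (α ^ 2 - 1 / 2) := by nlinarith
    _ ≤ (s + 1) * t := mul_le_mul (by linarith) (by linarith) (by nlinarith) (by linarith)

lemma exists_nat_eq_nearCube {n : ℕ} (hn : 8 ≤ n) :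
    ∃ s t : ℕ, (s : ℤ) = nearCube1 n ∧ (t : ℤ) = nearCube2 n ∧ n ≤ (s + 1) * t ∧
      t ≤ s * (s + 2) ∧ (s : ℝ) ≤ (n : ℝ) ^ ((1 : ℝ) / 3) + 1 / 2 := by
  set α : ℝ := (n : ℝ) ^ ((1 : ℝ) / 3)
  have hcube : α ^ 3 = n := by
    rw [← Real.rpow_natCast, ← Real.rpow_mul (Nat.cast_nonneg n)]
    norm_num
  have hsq : (n : ℝ) ^ ((2 : ℝ) / 3) = α ^ 2 := by
    rw [← Real.rpow_natCast, ← Real.rpow_mul (Nat.cast_nonneg n)]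
    norm_num
  have hα : 2 ≤ α := by
    by_contra! h
    have : α ^ 3 < 2 ^ 3 := by gcongr
    have : (8 : ℝ) ≤ n := by exact_mod_cast hn
    linarith
  have hs := abs_sub_comm α _ ▸ abs_sub_round α
  have ht := abs_sub_comm (α ^ 2) _ ▸ abs_sub_round (α ^ 2)
  obtain ⟨hs0, ht0, hn', hts⟩ := bounds_of_abs_sub_le_half hα hs ht
  obtain ⟨s, hsα⟩ : ∃ s : ℕ, (s : ℤ) = round α :=
    ⟨_, Int.toNat_of_nonneg (by exact_mod_cast hs0.le)⟩
  obtain ⟨t, htα⟩ : ∃ t : ℕ, (t : ℤ) = round (α ^ 2) :=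
    ⟨_, Int.toNat_of_nonneg (by exact_mod_cast ht0.le)⟩
  have hsR : (s : ℝ) = round α := by exact_mod_cast hsα
  have htR : (t : ℝ) = round (α ^ 2) := by exact_mod_cast htα
  rw [← hsR, ← htR, hcube] at hn'
  rw [← hsR, ← htR] at hts
  refine ⟨s, t, hsα, by rw [htα, nearCube2, hsq], by exact_mod_cast hn', by exact_mod_cast hts, ?_⟩
  linarith [(abs_le.mp (hsR ▸ hs)).2]

/-- For every sufficiently large `n`, the diameter of `Λ₃(n)` is at most `3·n^(1/3) + 3`. -/
theorem stmt_0 : ∃ N : ℕ, ∀ n : ℕ, N ≤ n →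
    ((lam3 n).diam : ℝ) ≤ 3 * (n : ℝ) ^ ((1 : ℝ) / 3) + 3 := by
  refine ⟨8, fun n hn => ?_⟩
  have : NeZero n := ⟨by omega⟩
  obtain ⟨s, t, hs, ht, hn', hts, hsα⟩ := exists_nat_eq_nearCube hn
  calc ((lam3 n).diam : ℝ) ≤ 3 * s := by exact_mod_cast lam3_diam_le hs ht hn' hts
    _ ≤ 3 * (n : ℝ) ^ ((1 : ℝ) / 3) + 3 := by linarith
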